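/- arXiv:1801.00733 — 4 statements merged into one kernel-verified Lean document; each statement's English description precedes it below -/
import Mathlib

section
/- Let x, y, z be rational numbers such that 9x + 9y + 9z = 2, the numbers 5x + 9y + 11z and 11x + 9y - z are integers, and 5x² + 9y² - z² + 18xy + 22xz + 18yz = 0. Then (x,y,z) = (1/9, -1/9, 2/9) or (x,y,z) = (-1/9, 5/9, -2/9). -/
/-!
Write `a = D·E1`, `s = D·E3`, `c = D·C1` for the pairings of `D = xE1 + yE3 + zC1`.
Inverting the intersection matrix and completing squares diagonalizes the intersection form:
`9 (a - s)² + (2c + a - 3s)² = 4 s² - 36 D²`. With `s = 2` and `D² = 0` this reads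
`9 (a - 2)² + (2c + a - 6)² = 16`, whose only integral solutions have `a = 2` and `c ∈ {0, 4}`.
-/

theorem nine_mul_sq_add_sq_eq_of_pairings {x y z a s c : ℚ}
    (ha : 5 * x + 9 * y + 11 * z = a) (hs : 9 * x + 9 * y + 9 * z = s)
    (hc : 11 * x + 9 * y - z = c) :
    9 * (a - s) ^ 2 + (2 * c + a - 3 * s) ^ 2 =
      4 * s ^ 2 - 36 * (5 * x ^ 2 + 9 * y ^ 2 - z ^ 2 + 18 * x * y + 22 * x * z + 18 * y * z) := by
  subst ha hs hc
  ring

theorem Int.eq_of_nine_mul_sq_add_sq_eq_sixteen {u v : ℤ} (h : 9 * u ^ 2 + v ^ 2 = 16) :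
    u = 0 ∧ (v = 4 ∨ v = -4) := by
  have hu₁ : -1 ≤ u := by nlinarith [sq_nonneg v]
  have hu₂ : u ≤ 1 := by nlinarith [sq_nonneg v]
  have hv₁ : -4 ≤ v := by nlinarith [sq_nonneg u]
  have hv₂ : v ≤ 4 := by nlinarith [sq_nonneg u]
  interval_cases u <;> interval_cases v <;> omega

/-- Step I: a class D = xE1 + yE3 + zC1 with D·E3 = 2, integral pairings with E1 and C1,
and D² = 0 must be D_I = (1/9)(E1 - E3 + 2C1) or D_II = (1/9)(-E1 + 5E3 - 2C1). -/
theorem stmt_6 (x y z : ℚ)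
    (h1 : 9 * x + 9 * y + 9 * z = 2)
    (h2 : ∃ a : ℤ, 5 * x + 9 * y + 11 * z = a)
    (h3 : ∃ c : ℤ, 11 * x + 9 * y - z = c)
    (h4 : 5 * x ^ 2 + 9 * y ^ 2 - z ^ 2 + 18 * x * y + 22 * x * z + 18 * y * z = 0) :
    (x = 1 / 9 ∧ y = -1 / 9 ∧ z = 2 / 9) ∨ (x = -1 / 9 ∧ y = 5 / 9 ∧ z = -2 / 9) := by
  obtain ⟨a, ha⟩ := h2
  obtain ⟨c, hc⟩ := h3
  have hdiag : 9 * (a - 2) ^ 2 + (2 * c + a - 6) ^ 2 = 16 := by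
    have := nine_mul_sq_add_sq_eq_of_pairings ha h1 hc
    rw [h4] at this
    norm_num at this
    exact_mod_cast this
  obtain ⟨ha₂, hc₄ | hc₀⟩ := Int.eq_of_nine_mul_sq_add_sq_eq_sixteen hdiag
  · obtain rfl : a = 2 := by omega
    obtain rfl : c = 4 := by omega
    push_cast at ha hc
    right
    refine ⟨?_, ?_, ?_⟩ <;> linarith
  · obtain rfl : a = 2 := by omega
    obtain rfl : c = 0 := by omega
    push_cast at ha hc
    left
    refine ⟨?_, ?_, ?_⟩ <;> linarith
end

section
/- With u = (1/9)(1,0,-1,2,0,0,0) and v = (1/9)(-1,0,5,-2,0,0,0) in ℚ⁷, one has uᵀNv = 8/9. In particular uᵀNv is not an integer. -/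
open Matrix

/-- The intersection matrix (Table 2) of the seven totally geodesic curves
E1, E2, E3, C1, C2, C3, C4 on the Cartwright–Steger surface. -/
def NCS : Matrix (Fin 7) (Fin 7) ℚ :=
  !![5, 13, 9, 11, 11, 25, 25;
     13, 5, 9, 7, 7, 29, 29;
     9, 9, 9, 9, 9, 27, 27;
     11, 7, 9, -1, 17, 37, 19;
     11, 7, 9, 17, -1, 19, 37;
     25, 29, 27, 37, 19, 71, 89;
     25, 29, 27, 19, 37, 89, 71]

/-- Step II: the pairing of D_I = (1/9)(E1 - E3 + 2C1) and
D_II = (1/9)(-E1 + 5E3 - 2C1) equals 8/9, which is not an integer. -/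
theorem stmt_7 :
    let u : Fin 7 → ℚ := (1 / 9 : ℚ) • ![1, 0, -1, 2, 0, 0, 0]
    let v : Fin 7 → ℚ := (1 / 9 : ℚ) • ![-1, 0, 5, -2, 0, 0, 0]
    u ⬝ᵥ (NCS *ᵥ v) = 8 / 9 ∧ ¬∃ n : ℤ, u ⬝ᵥ (NCS *ᵥ v) = (n : ℚ) := by
  intro u v
  have h : u ⬝ᵥ (NCS *ᵥ v) = 8 / 9 := by
    simp [u, v, NCS, dotProduct, mulVec, Fin.sum_univ_succ, Matrix.cons_val_zero, Matrix.cons_val_succ]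
    norm_num
  refine ⟨h, ?_⟩
  rintro ⟨n, hn⟩
  rw [h] at hn
  have h8 : (8 : ℚ) = 9 * n := by field_simp at hn; linarith
  have h9 : (8 : ℤ) = 9 * n := by exact_mod_cast h8
  omega
end

section
/- Let w ∈ ℚ¹⁰ be a vector whose coordinates at positions 2, 8, 9, 10 (corresponding to E2', C2', C3', C4') are zero. Suppose the vector Pw has entries 2, 0, 1, 0, 1, 2 at positions 1 through 6 (corresponding to E1', E2', E3', R1, R2, R3), and wᵀPw = -2. Then w = e₇ (the class of C1') or w = -e₁ + 3e₃ + 3e₅ - e₆ - e₇ (the class of -E1' + 3E3' + 3R2 - R3 - C1'), where eᵢ denotes the i-th standard basis vector. -/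
open Matrix

/-- The intersection matrix (Table 3) of the ten curves
E1', E2', E3', R1, R2, R3, C1', C2', C3', C4' on the minimal resolution Y
of the quotient of the Cartwright–Steger surface. -/
def PY : Matrix (Fin 10) (Fin 10) ℚ :=
  !![-3, 0, 0, 3, 1, 2, 2, 2, 2, 2;
     0, -3, 0, 2, 1, 3, 0, 0, 4, 4;
     0, 0, -3, 1, 4, 1, 1, 1, 3, 3;
     3, 2, 1, -3, 0, 0, 0, 0, 4, 4;
     1, 1, 4, 0, -3, 0, 1, 1, 3, 3;
     2, 3, 1, 0, 0, -3, 2, 2, 2, 2;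
     2, 0, 1, 0, 1, 2, -2, 4, 10, 4;
     2, 0, 1, 0, 1, 2, 4, -2, 4, 10;
     2, 4, 3, 4, 3, 2, 10, 4, 14, 20;
     2, 4, 3, 4, 3, 2, 4, 10, 20, 14]

theorem sum_univ_nine' {β} [AddCommMonoid β] (f : Fin 9 → β) :
    ∑ i, f i = f 0 + f 1 + f 2 + f 3 + f 4 + f 5 + f 6 + f 7 + f 8 := by
  rw [Fin.sum_univ_castSucc, Fin.sum_univ_eight]; rfl

theorem sum_univ_ten' {β} [AddCommMonoid β] (f : Fin 10 → β) :
    ∑ i, f i = f 0 + f 1 + f 2 + f 3 + f 4 + f 5 + f 6 + f 7 + f 8 + f 9 := by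
  rw [Fin.sum_univ_castSucc, sum_univ_nine']; rfl

/-- Lemma 5.1: a class w with vanishing coordinates at E2', C2', C3', C4',
prescribed pairings 2, 0, 1, 0, 1, 2 with E1', E2', E3', R1, R2, R3 and
self-intersection -2 is the class of C1' or of -E1' + 3E3' + 3R2 - R3 - C1'. -/
theorem stmt_13 (w : Fin 10 → ℚ)
    (hz : w 1 = 0 ∧ w 7 = 0 ∧ w 8 = 0 ∧ w 9 = 0)
    (hp : (PY *ᵥ w) 0 = 2 ∧ (PY *ᵥ w) 1 = 0 ∧ (PY *ᵥ w) 2 = 1 ∧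
          (PY *ᵥ w) 3 = 0 ∧ (PY *ᵥ w) 4 = 1 ∧ (PY *ᵥ w) 5 = 2)
    (hself : w ⬝ᵥ (PY *ᵥ w) = -2) :
    w = ![0, 0, 0, 0, 0, 0, 1, 0, 0, 0] ∨
    w = ![-1, 0, 3, 0, 3, -1, -1, 0, 0, 0] := by
  obtain ⟨h1, h7, h8, h9⟩ := hz
  obtain ⟨p0, p1, p2, p3, p4, p5⟩ := hp
  simp only [PY, mulVec, dotProduct, sum_univ_ten', Matrix.of_apply,
    show ((1:Fin 10)) = (0:Fin 9).succ from rfl,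
    show ((2:Fin 10)) = (1:Fin 9).succ from rfl,
    show ((3:Fin 10)) = (2:Fin 9).succ from rfl,
    show ((4:Fin 10)) = (3:Fin 9).succ from rfl,
    show ((5:Fin 10)) = (4:Fin 9).succ from rfl,
    show ((6:Fin 10)) = (5:Fin 9).succ from rfl,
    show ((7:Fin 10)) = (6:Fin 9).succ from rfl,
    show ((8:Fin 10)) = (7:Fin 9).succ from rfl,
    show ((9:Fin 10)) = (8:Fin 9).succ from rfl,
    show ((1:Fin 9)) = (0:Fin 8).succ from rfl,
    show ((2:Fin 9)) = (1:Fin 8).succ from rfl,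
    show ((3:Fin 9)) = (2:Fin 8).succ from rfl,
    show ((4:Fin 9)) = (3:Fin 8).succ from rfl,
    show ((5:Fin 9)) = (4:Fin 8).succ from rfl,
    show ((6:Fin 9)) = (5:Fin 8).succ from rfl,
    show ((7:Fin 9)) = (6:Fin 8).succ from rfl,
    show ((8:Fin 9)) = (7:Fin 8).succ from rfl,
    show ((1:Fin 8)) = (0:Fin 7).succ from rfl,
    show ((2:Fin 8)) = (1:Fin 7).succ from rfl,
    show ((3:Fin 8)) = (2:Fin 7).succ from rfl,
    show ((4:Fin 8)) = (3:Fin 7).succ from rfl,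
    show ((5:Fin 8)) = (4:Fin 7).succ from rfl,
    show ((6:Fin 8)) = (5:Fin 7).succ from rfl,
    show ((7:Fin 8)) = (6:Fin 7).succ from rfl,
    show ((1:Fin 7)) = (0:Fin 6).succ from rfl,
    show ((2:Fin 7)) = (1:Fin 6).succ from rfl,
    show ((3:Fin 7)) = (2:Fin 6).succ from rfl,
    show ((4:Fin 7)) = (3:Fin 6).succ from rfl,
    show ((5:Fin 7)) = (4:Fin 6).succ from rfl,
    show ((6:Fin 7)) = (5:Fin 6).succ from rfl,
    show ((1:Fin 6)) = (0:Fin 5).succ from rfl,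
    show ((2:Fin 6)) = (1:Fin 5).succ from rfl,
    show ((3:Fin 6)) = (2:Fin 5).succ from rfl,
    show ((4:Fin 6)) = (3:Fin 5).succ from rfl,
    show ((5:Fin 6)) = (4:Fin 5).succ from rfl,
    show ((1:Fin 5)) = (0:Fin 4).succ from rfl,
    show ((2:Fin 5)) = (1:Fin 4).succ from rfl,
    show ((3:Fin 5)) = (2:Fin 4).succ from rfl,
    show ((4:Fin 5)) = (3:Fin 4).succ from rfl,
    show ((1:Fin 4)) = (0:Fin 3).succ from rfl,
    show ((2:Fin 4)) = (1:Fin 3).succ from rfl,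
    show ((3:Fin 4)) = (2:Fin 3).succ from rfl,
    show ((1:Fin 3)) = (0:Fin 2).succ from rfl,
    show ((2:Fin 3)) = (1:Fin 2).succ from rfl,
    show ((1:Fin 2)) = (0:Fin 1).succ from rfl,
    Matrix.cons_val_zero, Matrix.cons_val_succ,
    h1, h7, h8, h9, mul_zero, zero_mul, add_zero, zero_add] at p0 p1 p2 p3 p4 p5 hself
  simp only [show ((0:Fin 9)).succ = (1:Fin 10) from rfl,
    show (((0:Fin 8)).succ).succ = (2:Fin 10) from rfl,
    show ((((0:Fin 7)).succ).succ).succ = (3:Fin 10) from rfl,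
    show (((((0:Fin 6)).succ).succ).succ).succ = (4:Fin 10) from rfl,
    show ((((((0:Fin 5)).succ).succ).succ).succ).succ = (5:Fin 10) from rfl,
    show (((((((0:Fin 4)).succ).succ).succ).succ).succ).succ = (6:Fin 10) from rfl,
    show ((((((((0:Fin 3)).succ).succ).succ).succ).succ).succ).succ = (7:Fin 10) from rfl,
    show (((((((((0:Fin 2)).succ).succ).succ).succ).succ).succ).succ).succ = (8:Fin 10) from rfl,
    show ((((((((((0:Fin 1)).succ).succ).succ).succ).succ).succ).succ).succ).succ = (9:Fin 10) from rfl] at p0 p1 p2 p3 p4 p5 hself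
  have e3 : w 3 = 0 := by linarith
  have e0 : w 0 = (w 6 - 1) / 2 := by linarith
  have e2 : w 2 = 3 * (1 - w 6) / 2 := by linarith
  have e4 : w 4 = 3 * (1 - w 6) / 2 := by linarith
  have e5 : w 5 = (w 6 - 1) / 2 := by linarith
  have hq : (w 6 - 1) * (w 6 + 1) = 0 := by
    rw [h1, h7, h8, h9, e0, e2, e3, e4, e5] at hself; linear_combination (-1/3 : ℚ) * hself
  rcases mul_eq_zero.mp hq with h | h
  · left
    have h6 : w 6 = 1 := by linarith
    have c0 : w 0 = 0 := by rw [e0, h6]; norm_num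
    have c2 : w 2 = 0 := by rw [e2, h6]; norm_num
    have c4 : w 4 = 0 := by rw [e4, h6]; norm_num
    have c5 : w 5 = 0 := by rw [e5, h6]; norm_num
    funext i
    fin_cases i
    · exact c0
    · exact h1
    · exact c2
    · exact e3
    · exact c4
    · exact c5
    · exact h6
    · exact h7
    · exact h8
    · exact h9
  · right
    have h6 : w 6 = -1 := by linarith
    have c0 : w 0 = -1 := by rw [e0, h6]; norm_num
    have c2 : w 2 = 3 := by rw [e2, h6]; norm_num
    have c4 : w 4 = 3 := by rw [e4, h6]; norm_num
    have c5 : w 5 = -1 := by rw [e5, h6]; norm_num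
    funext i
    fin_cases i
    · exact c0
    · exact h1
    · exact c2
    · exact e3
    · exact c4
    · exact c5
    · exact h6
    · exact h7
    · exact h8
    · exact h9
end

section
/- There is no additive subgroup L of ℚ³ containing both vectors (1/9, -1/9, 2/9) and (-1/9, 5/9, -2/9) such that uᵀMv is an integer for all u, v ∈ L. -/
open Matrix

/-- The intersection matrix of the curves E1, E3, C1 on the Cartwright–Steger
surface, a ℚ-basis of its Néron–Severi group. -/
def MCS : Matrix (Fin 3) (Fin 3) ℚ :=
  !![5, 9, 11; 9, 9, 9; 11, 9, -1]

/-- There is no additive subgroup of ℚ³ containing both (1/9, -1/9, 2/9) and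
(-1/9, 5/9, -2/9) on which the pairing uᵀMv is integer-valued: the classes
D_I and D_II cannot simultaneously be integral divisor classes. -/
theorem stmt_19 :
    ¬∃ L : AddSubgroup (Fin 3 → ℚ),
      (![1/9, -1/9, 2/9] : Fin 3 → ℚ) ∈ L ∧
      (![-1/9, 5/9, -2/9] : Fin 3 → ℚ) ∈ L ∧
      ∀ u v : Fin 3 → ℚ, u ∈ L → v ∈ L → ∃ n : ℤ, u ⬝ᵥ (MCS *ᵥ v) = (n : ℚ) := by
  rintro ⟨L, h1, h2, h3⟩
  obtain ⟨n, hn⟩ := h3 _ _ h1 h2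
  simp [MCS, mulVec, dotProduct, Fin.sum_univ_three] at hn
  have h9 : (9 : ℚ) * n = 8 := by linarith
  have : (9 : ℤ) * n = 8 := by exact_mod_cast h9
  omega
end
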